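/- There exists a matching set M between B and A that is fair and orderly and whose trading volume equals the minimum over all prices of the sum of supply and demand: M.card = sInf { n : ℕ | ∃ p : ℝ, n = S(p) + D(p) }. (The mathematical content of the paper's Theorem 1: the MV algorithm produces a fair, orderly matching set achieving trading volume Q_MV = min over p of (S(p) + D(p)).) -/

import Mathlib

open List

def IsMatchingSet {β α : Type*} [DecidableEq β] [DecidableEq α]
    (B : Finset β) (A : Finset α) (pb : β → ℝ) (pa : α → ℝ)
    (M : Finset (β × α)) : Prop :=
  (∀ x ∈ M, x.1 ∈ B ∧ x.2 ∈ A ∧ pa x.2 ≤ pb x.1) ∧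
  (∀ x ∈ M, ∀ y ∈ M, (x.1 = y.1 → x.2 = y.2) ∧ (x.2 = y.2 → x.1 = y.1))


def IsFair {β α : Type*} [DecidableEq β] [DecidableEq α]
    (B : Finset β) (A : Finset α) (pb : β → ℝ) (pa : α → ℝ)
    (M : Finset (β × α)) : Prop :=
  (∀ b ∈ B, ∀ b' ∈ B, pb b < pb b' → (∃ a, (b, a) ∈ M) → (∃ a, (b', a) ∈ M)) ∧
  (∀ a ∈ A, ∀ a' ∈ A, pa a' < pa a → (∃ b, (b, a) ∈ M) → (∃ b, (b, a') ∈ M))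


def IsOrderly {β α : Type*} (pb : β → ℝ) (pa : α → ℝ)
    (M : Finset (β × α)) : Prop :=
  ∀ x ∈ M, ∀ y ∈ M,
    (pa x.2 < pa y.2 → pb x.1 ≤ pb y.1) ∧ (pb x.1 < pb y.1 → pa x.2 ≤ pa y.2)

/-! ### Auxiliary lemmas -/

lemma MV.exists_sorted_list {γ : Type*} [DecidableEq γ] (s : Finset γ) (f : γ → ℝ) :
    ∃ l : List γ, l.Nodup ∧ l.toFinset = s ∧ (l.map f).Pairwise (· ≤ ·) := by
  classical
  refine ⟨s.toList.mergeSort (fun x y => decide (f x ≤ f y)), ?_, ?_, ?_⟩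
  · exact ((mergeSort_perm _ _).nodup_iff).2 s.nodup_toList
  · ext x; simp [List.mem_mergeSort]
  · have h := pairwise_mergeSort (le := fun x y => decide (f x ≤ f y))
      (fun a b c hab hbc => by simp at *; linarith)
      (fun a b => by simp [le_total]) s.toList
    rw [List.pairwise_map]
    exact h.imp (fun {a b} hab => by simpa using hab)

lemma MV.sorted_map_rel {γ : Type*} {l : List γ} {f : γ → ℝ}
    (hs : (l.map f).Pairwise (· ≤ ·)) {i j : ℕ} (hi : i < l.length) (hj : j < l.length)
    (hij : i ≤ j) :
    f (l[i]'hi) ≤ f (l[j]'hj) := by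
  have := List.Pairwise.rel_get_of_le (R := (· ≤ ·)) hs
    (a := ⟨i, by simpa using hi⟩) (b := ⟨j, by simpa using hj⟩)
    (Fin.mk_le_mk.2 hij)
  simpa using this

lemma MV.filter_length_le_of_lt {γ : Type*} (l : List γ) (f : γ → ℝ)
    (hs : (l.map f).Pairwise (· ≤ ·)) (i : ℕ) (hi : i < l.length) (p : ℝ)
    (hp : p < f (l.get ⟨i, hi⟩)) (q : γ → Prop) [DecidablePred q]
    (hq : ∀ x, q x → f x ≤ p) :
    (l.filter (fun x => decide (q x))).length ≤ i := by
  conv_lhs => rw [← List.take_append_drop i l]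
  rw [List.filter_append, List.length_append]
  have h2 : (l.drop i).filter (fun x => decide (q x)) = [] := by
    rw [List.filter_eq_nil_iff]
    intro x hx
    obtain ⟨t, ht⟩ := List.mem_iff_get.1 hx
    have hlen : i + t.1 < l.length := by
      have := t.2; simp [List.length_drop] at this; omega
    have hx' : x = l.get ⟨i + t.1, hlen⟩ := by
      rw [← ht]; simp
    have hle : f (l.get ⟨i, hi⟩) ≤ f x := by
      rw [hx']
      have := List.Pairwise.rel_get_of_le (R := (· ≤ ·)) hs
        (a := ⟨i, by simpa using hi⟩) (b := ⟨i + t.1, by simpa using hlen⟩) (by simp)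
      simpa using this
    simp only [decide_eq_true_eq]
    intro hqx
    exact absurd (hq x hqx) (by linarith)
  rw [h2]
  simp only [List.length_nil, Nat.add_zero]
  calc ((l.take i).filter _).length ≤ (l.take i).length := List.length_filter_le _ _
    _ ≤ i := by simp

lemma MV.filter_length_le_of_gt {γ : Type*} (l : List γ) (f : γ → ℝ)
    (hs : (l.map f).Pairwise (· ≤ ·)) (j : ℕ) (hj : j < l.length) (p : ℝ)
    (hp : f (l.get ⟨j, hj⟩) < p) (q : γ → Prop) [DecidablePred q]
    (hq : ∀ x, q x → p ≤ f x) :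
    (l.filter (fun x => decide (q x))).length ≤ l.length - (j + 1) := by
  conv_lhs => rw [← List.take_append_drop (j+1) l]
  rw [List.filter_append, List.length_append]
  have h1 : (l.take (j+1)).filter (fun x => decide (q x)) = [] := by
    rw [List.filter_eq_nil_iff]
    intro x hx
    obtain ⟨t, ht⟩ := List.mem_iff_get.1 hx
    have htl : t.1 < l.length := by
      have := t.2; simp [List.length_take] at this; omega
    have htj : t.1 ≤ j := by
      have := t.2; simp [List.length_take] at this; omega
    have hx' : x = l.get ⟨t.1, htl⟩ := by
      rw [← ht]
      simp only [List.get_eq_getElem, List.getElem_take]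
    have hle : f x ≤ f (l.get ⟨j, hj⟩) := by
      rw [hx']
      have := List.Pairwise.rel_get_of_le (R := (· ≤ ·)) hs
        (a := ⟨t.1, by simpa using htl⟩) (b := ⟨j, by simpa using hj⟩) (by simpa using htj)
      simpa using this
    simp only [decide_eq_true_eq]
    intro hqx
    exact absurd (hq x hqx) (by linarith)
  rw [h1]
  simp only [List.length_nil, Nat.zero_add]
  calc ((l.drop (j+1)).filter _).length ≤ (l.drop (j+1)).length := List.length_filter_le _ _
    _ ≤ l.length - (j+1) := by simp

lemma MV.matching_card_le {β α : Type*} [DecidableEq β] [DecidableEq α]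
    (B : Finset β) (A : Finset α) (pb : β → ℝ) (pa : α → ℝ)
    (M : Finset (β × α)) (hM : IsMatchingSet B A pb pa M) (p : ℝ) :
    M.card ≤ (A.filter (fun a => pa a ≤ p)).card + (B.filter (fun b => p ≤ pb b)).card := by
  classical
  have := Finset.card_le_card_of_injOn
    (f := fun x : β × α => if pa x.2 ≤ p then Sum.inl x.2 else Sum.inr x.1)
    (s := M) (t := (A.filter (fun a => pa a ≤ p)).disjSum (B.filter (fun b => p ≤ pb b)))
    ?_ ?_
  · simpa [Finset.card_disjSum] using this
  · intro x hx
    obtain ⟨hB, hA, hle⟩ := hM.1 x hx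
    by_cases h : pa x.2 ≤ p
    · simp [h, Finset.inl_mem_disjSum, hA]
    · push_neg at h
      simp only [if_neg (not_le.2 h), Finset.mem_coe, Finset.inr_mem_disjSum, Finset.mem_filter]
      exact ⟨hB, le_trans (le_of_lt h) hle⟩
  · intro x hx y hy hxy
    by_cases h1 : pa x.2 ≤ p <;> by_cases h2 : pa y.2 ≤ p <;>
      simp [h1, h2] at hxy
    · have := (hM.2 x hx y hy).2 hxy
      exact Prod.ext this hxy
    · exact Prod.ext hxy ((hM.2 x hx y hy).1 hxy)

lemma MV.filter_card_eq {γ : Type*} [DecidableEq γ] (l : List γ) (hl : l.Nodup)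
    (s : Finset γ) (hs : l.toFinset = s) (q : γ → Prop) [DecidablePred q] :
    (s.filter q).card = (l.filter (fun x => decide (q x))).length := by
  subst hs
  have : Finset.filter q l.toFinset = (l.filter (fun x => decide (q x))).toFinset := by
    ext x; simp [List.mem_filter]
  rw [this, List.toFinset_card_of_nodup (hl.filter _)]

lemma MV.exists_below (s : Finset ℝ) : ∃ p : ℝ, ∀ x ∈ s, p < x := by
  rcases s.eq_empty_or_nonempty with rfl | h
  · exact ⟨0, by simp⟩
  · exact ⟨s.min' h - 1, fun x hx => lt_of_lt_of_le (by linarith) (s.min'_le x hx)⟩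

lemma MV.exists_above (s : Finset ℝ) : ∃ p : ℝ, ∀ x ∈ s, x < p := by
  rcases s.eq_empty_or_nonempty with rfl | h
  · exact ⟨0, by simp⟩
  · exact ⟨s.max' h + 1, fun x hx => lt_of_le_of_lt (s.le_max' x hx) (by linarith)⟩

set_option maxHeartbeats 1000000 in
theorem mv_produces_fair_orderly_maximal_volume {β α : Type*} [DecidableEq β] [DecidableEq α]
    (B : Finset β) (A : Finset α) (pb : β → ℝ) (pa : α → ℝ) :
    ∃ M : Finset (β × α), IsMatchingSet B A pb pa M ∧ IsFair B A pb pa M ∧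
      IsOrderly pb pa M ∧
      M.card = sInf { n : ℕ | ∃ p : ℝ,
        n = (A.filter (fun a => pa a ≤ p)).card + (B.filter (fun b => p ≤ pb b)).card } := by
  classical
  obtain ⟨lb, hlbnd, hlbF, hlbS⟩ := MV.exists_sorted_list B pb
  obtain ⟨la, hland, hlaF, hlaS⟩ := MV.exists_sorted_list A pa
  set n := lb.length with hn_def
  set m := la.length with hm_def
  have hBcard : B.card = n := by rw [← hlbF, List.toFinset_card_of_nodup hlbnd]
  have hAcard : A.card = m := by rw [← hlaF, List.toFinset_card_of_nodup hland]
  have hmemB : ∀ x ∈ lb, x ∈ B := fun x hx => by rw [← hlbF]; exact List.mem_toFinset.2 hx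
  have hmemA : ∀ x ∈ la, x ∈ A := fun x hx => by rw [← hlaF]; exact List.mem_toFinset.2 hx
  have hBmem : ∀ x ∈ B, x ∈ lb := fun x hx => by rw [← hlbF] at hx; exact List.mem_toFinset.1 hx
  have hAmem : ∀ x ∈ A, x ∈ la := fun x hx => by rw [← hlaF] at hx; exact List.mem_toFinset.1 hx
  -- feasibility predicate
  set P : ℕ → Prop := fun k => k ≤ n ∧ k ≤ m ∧
    ∀ i : ℕ, ∀ (hi : i < m) (hj : n - k + i < n), i < k →
      pa (la[i]'hi) ≤ pb (lb[n - k + i]'hj) with hP_def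
  set k := Nat.findGreatest P (min n m) with hk_def
  have hP0 : P 0 := ⟨Nat.zero_le _, Nat.zero_le _, fun i _ _ h => by omega⟩
  have hPk : P k := Nat.findGreatest_spec (Nat.zero_le _) hP0
  obtain ⟨hkn, hkm, hkf⟩ := hPk
  -- the matching
  set d := lb.drop (n - k) with hd_def
  set t := la.take k with ht_def
  have hdlen : d.length = k := by simp [hd_def]; omega
  have htlen : t.length = k := by simp [ht_def]; omega
  set L := d.zip t with hL_def
  have hLlen : L.length = k := by simp [hL_def, hdlen, htlen]
  -- getElem facts
  have hdget : ∀ (i : ℕ) (hi : i < k), d[i]'(by omega) = lb[n - k + i]'(by omega) := by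
    intro i hi
    simp [hd_def]
  have htget : ∀ (i : ℕ) (hi : i < k), t[i]'(by omega) = la[i]'(by omega) := by
    intro i hi
    simp [ht_def]
  have hLget : ∀ (i : ℕ) (hi : i < k),
      L[i]'(by omega) = (lb[n - k + i]'(by omega), la[i]'(by omega)) := by
    intro i hi
    have h1 : L[i]'(by omega) = (d[i]'(by omega), t[i]'(by omega)) := List.getElem_zip
    rw [h1, hdget i hi, htget i hi]
  have hLmem : ∀ x ∈ L, ∃ (i : ℕ) (hi : i < k),
      x = (lb[n - k + i]'(by omega), la[i]'(by omega)) := by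
    intro x hx
    obtain ⟨i, hilt, hget⟩ := List.mem_iff_getElem.1 hx
    have hik : i < k := by omega
    exact ⟨i, hik, by rw [← hget, hLget i hik]⟩
  have hLmem' : ∀ (i : ℕ) (hi : i < k),
      ((lb[n - k + i]'(by omega), la[i]'(by omega)) : β × α) ∈ L := by
    intro i hi
    have : L[i]'(by omega) ∈ L := List.getElem_mem _
    rwa [hLget i hi] at this
  have hLnd : L.Nodup := by
    rw [List.nodup_iff_injective_get]
    intro x y hxy
    have hx := hLget x.1 (by have := x.2; omega)
    have hy := hLget y.1 (by have := y.2; omega)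
    simp only [List.get_eq_getElem] at hxy
    rw [hx, hy] at hxy
    have : n - k + x.1 = n - k + y.1 :=
      (List.Nodup.getElem_inj_iff hlbnd).1 (congrArg Prod.fst hxy)
    exact Fin.ext (by omega)
  have hMatch : IsMatchingSet B A pb pa L.toFinset := by
    constructor
    · intro x hx
      obtain ⟨i, hi, rfl⟩ := hLmem x (List.mem_toFinset.1 hx)
      refine ⟨?_, ?_, ?_⟩
      · exact hmemB _ (List.getElem_mem _)
      · exact hmemA _ (List.getElem_mem _)
      · exact hkf i (by omega) (by omega) hi
    · intro x hx y hy
      obtain ⟨i, hi, rfl⟩ := hLmem x (List.mem_toFinset.1 hx)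
      obtain ⟨j, hj, rfl⟩ := hLmem y (List.mem_toFinset.1 hy)
      constructor
      · intro h1
        have : n - k + i = n - k + j := (List.Nodup.getElem_inj_iff hlbnd).1 h1
        have : i = j := by omega
        subst this; rfl
      · intro h2
        have : i = j := (List.Nodup.getElem_inj_iff hland).1 h2
        subst this; rfl
  refine ⟨L.toFinset, hMatch, ?_, ?_, ?_⟩
  -- IsFair
  case _ =>
    constructor
    · intro b hb b' hb' hlt ⟨a, hba⟩
      obtain ⟨i, hi, heq⟩ := hLmem (b, a) (List.mem_toFinset.1 hba)
      have hbeq : b = lb[n - k + i]'(by omega) := congrArg Prod.fst heq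
      have hb'mem : b' ∈ lb := hBmem b' hb'
      obtain ⟨s, hs, hseq⟩ := List.mem_iff_getElem.1 hb'mem
      have hsk : n - k ≤ s := by
        by_contra hcon
        push_neg at hcon
        have hle : pb (lb[s]'hs) ≤ pb (lb[n - k + i]'(by omega)) :=
          MV.sorted_map_rel hlbS (by omega) (by omega) (by omega)
        rw [hseq, ← hbeq] at hle
        linarith
      have hu : s - (n - k) < k := by omega
      refine ⟨la[s - (n - k)]'(by omega), List.mem_toFinset.2 ?_⟩
      have := hLmem' (s - (n - k)) hu
      have hbb : lb[n - k + (s - (n - k))]'(by omega) = b' := by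
        have : n - k + (s - (n - k)) = s := by omega
        simp_rw [this]; exact hseq
      rwa [hbb] at this
    · intro a ha a' ha' hlt ⟨b, hba⟩
      obtain ⟨i, hi, heq⟩ := hLmem (b, a) (List.mem_toFinset.1 hba)
      have haeq : a = la[i]'(by omega) := congrArg Prod.snd heq
      have ha'mem : a' ∈ la := hAmem a' ha'
      obtain ⟨s, hs, hseq⟩ := List.mem_iff_getElem.1 ha'mem
      have hsk : s < k := by
        by_contra hcon
        push_neg at hcon
        have hle : pa (la[i]'(by omega)) ≤ pa (la[s]'hs) :=
          MV.sorted_map_rel hlaS (by omega) (by omega) (by omega)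
        rw [hseq, ← haeq] at hle
        linarith
      refine ⟨lb[n - k + s]'(by omega), List.mem_toFinset.2 ?_⟩
      have := hLmem' s hsk
      rwa [hseq] at this
  -- IsOrderly
  case _ =>
    intro x hx y hy
    obtain ⟨i, hi, rfl⟩ := hLmem x (List.mem_toFinset.1 hx)
    obtain ⟨j, hj, rfl⟩ := hLmem y (List.mem_toFinset.1 hy)
    constructor
    · intro hlt
      simp only at hlt ⊢
      have hij : i ≤ j := by
        by_contra hcon
        push_neg at hcon
        have : pa (la[j]'(by omega)) ≤ pa (la[i]'(by omega)) :=
          MV.sorted_map_rel hlaS (by omega) (by omega) (by omega)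
        linarith
      exact MV.sorted_map_rel hlbS (i := n - k + i) (j := n - k + j)
        (by omega) (by omega) (by omega)
    · intro hlt
      simp only at hlt ⊢
      have hij : i ≤ j := by
        by_contra hcon
        push_neg at hcon
        have : pb (lb[n - k + j]'(by omega)) ≤ pb (lb[n - k + i]'(by omega)) :=
          MV.sorted_map_rel hlbS (by omega) (by omega) (by omega)
        linarith
      exact MV.sorted_map_rel hlaS (i := i) (j := j) (by omega) (by omega) (by omega)
  -- cardinality
  case _ =>
    have hMcard : L.toFinset.card = k := by
      rw [List.toFinset_card_of_nodup hLnd, hLlen]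
    have hlow : ∀ x ∈ {nn : ℕ | ∃ p : ℝ,
        nn = (A.filter (fun a => pa a ≤ p)).card + (B.filter (fun b => p ≤ pb b)).card},
        k ≤ x := by
      rintro x ⟨p, rfl⟩
      calc k = L.toFinset.card := hMcard.symm
        _ ≤ _ := MV.matching_card_le B A pb pa _ hMatch p
    have hmem : k ∈ {nn : ℕ | ∃ p : ℝ,
        nn = (A.filter (fun a => pa a ≤ p)).card + (B.filter (fun b => p ≤ pb b)).card} := by
      rcases Nat.lt_or_ge k n with hkn' | hkn'
      · rcases Nat.lt_or_ge k m with hkm' | hkm'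
        · have hnP : ¬ P (k+1) := Nat.findGreatest_is_greatest (n := min n m)
            (by rw [← hk_def]; omega) (Nat.le_min.2 ⟨by omega, by omega⟩)
          simp only [hP_def] at hnP
          push_neg at hnP
          obtain ⟨i, hi, hj, hik, hlt⟩ := hnP (by omega) (by omega)
          set p := (pb (lb[n - (k+1) + i]'hj) + pa (la[i]'hi)) / 2 with hp_def
          have hplt : p < pa (la[i]'hi) := by rw [hp_def]; linarith
          have hpgt : pb (lb[n - (k+1) + i]'hj) < p := by rw [hp_def]; linarith
          have haS : (A.filter (fun a => pa a ≤ p)).card ≤ i := by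
            rw [MV.filter_card_eq la hland A hlaF]
            exact MV.filter_length_le_of_lt la pa hlaS i hi p (by simpa using hplt) _
              (fun x hx => hx)
          have hbS : (B.filter (fun b => p ≤ pb b)).card ≤ n - (n - (k+1) + i + 1) := by
            rw [MV.filter_card_eq lb hlbnd B hlbF]
            exact MV.filter_length_le_of_gt lb pb hlbS _ hj p (by simpa using hpgt) _
              (fun x hx => hx)
          have hk_le := hlow _ ⟨p, rfl⟩
          exact ⟨p, by omega⟩
        · obtain ⟨p, hp⟩ := MV.exists_above ((A.image pa) ∪ (B.image pb))
          refine ⟨p, ?_⟩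
          have hA : A.filter (fun a => pa a ≤ p) = A :=
            Finset.filter_eq_self.2 fun a ha =>
              le_of_lt (hp _ (Finset.mem_union_left _ (Finset.mem_image_of_mem pa ha)))
          have hB : B.filter (fun b => p ≤ pb b) = ∅ :=
            Finset.filter_eq_empty_iff.2 fun b hb =>
              not_le.2 (hp _ (Finset.mem_union_right _ (Finset.mem_image_of_mem pb hb)))
          rw [hA, hB]
          simp only [Finset.card_empty]
          omega
      · obtain ⟨p, hp⟩ := MV.exists_below ((A.image pa) ∪ (B.image pb))
        refine ⟨p, ?_⟩
        have hA : A.filter (fun a => pa a ≤ p) = ∅ :=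
          Finset.filter_eq_empty_iff.2 fun a ha =>
            not_le.2 (hp _ (Finset.mem_union_left _ (Finset.mem_image_of_mem pa ha)))
        have hB : B.filter (fun b => p ≤ pb b) = B :=
          Finset.filter_eq_self.2 fun b hb =>
            le_of_lt (hp _ (Finset.mem_union_right _ (Finset.mem_image_of_mem pb hb)))
        rw [hA, hB]
        simp only [Finset.card_empty]
        omega
    rw [hMcard]
    exact Nat.le_antisymm (le_csInf ⟨k, hmem⟩ hlow) (Nat.sInf_le hmem)
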